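/- arXiv:1912.01104 — 7 statements merged into one kernel-verified Lean document; each statement's English description precedes it below -/
import Mathlib

section
/- Let p be an odd prime and set n = 4p. If n is 2-practical, then the multiplicative order of 2 modulo p is at most 5. -/
/-- `n` is 2-practical: `X^n - 1` over `𝔽₂` has a monic divisor of every degree `m`, `1 ≤ m ≤ n`. -/
def TwoPractical (n : ℕ) : Prop :=
  ∀ m : ℕ, 1 ≤ m → m ≤ n →
    ∃ q : Polynomial (ZMod 2), q.Monic ∧ q.natDegree = m ∧ q ∣ (Polynomial.X ^ n - 1)

open Polynomial UniqueFactorizationMonoid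

lemma key_deg (p : ℕ) (hp : p.Prime) (π : Polynomial (ZMod 2)) (hmon : π.Monic)
    (hirr : Irreducible π) (hdvd : π ∣ X ^ p - 1) (hne : π ≠ X + 1) :
    orderOf (2 : ZMod p) ∣ π.natDegree := by
  haveI : Fact p.Prime := ⟨hp⟩
  haveI := Fact.mk hirr
  set K := AdjoinRoot π with hK
  set α : K := AdjoinRoot.root π with hα
  have hroot : α ^ p = 1 := by
    have h0 : AdjoinRoot.mk π (X ^ p - 1) = 0 := AdjoinRoot.mk_eq_zero.mpr hdvd
    rw [map_sub, map_pow, map_one, AdjoinRoot.mk_X, sub_eq_zero] at h0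
    exact h0
  have hα1 : α ≠ 1 := by
    intro h1
    have h0 : AdjoinRoot.mk π (X - C 1) = 0 := by
      rw [map_sub, AdjoinRoot.mk_X, AdjoinRoot.mk_C, ← hα, h1, map_one, sub_self]
    have hdvd1 : π ∣ X - C 1 := AdjoinRoot.mk_eq_zero.mp h0
    have hassoc := hirr.associated_of_dvd (irreducible_X_sub_C (1 : ZMod 2)) hdvd1
    have heq := eq_of_monic_of_associated hmon (monic_X_sub_C 1) hassoc
    apply hne
    rw [heq, map_one, sub_eq_add_neg, CharTwo.neg_eq]
  have horder : orderOf α = p := orderOf_eq_prime hroot hα1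
  have hπ0 : π ≠ 0 := hmon.ne_zero
  let pb := AdjoinRoot.powerBasis hπ0
  haveI : Module.Finite (ZMod 2) K := pb.finite
  haveI : Finite K := Module.finite_of_finite (ZMod 2)
  haveI : Fintype K := Fintype.ofFinite K
  have hcard : Fintype.card K = 2 ^ π.natDegree := by
    rw [Module.card_eq_pow_finrank (K := ZMod 2) (V := K), ZMod.card, pb.finrank]
    rfl
  have hu : IsUnit α := IsUnit.of_pow_eq_one hroot hp.ne_zero
  have hpdvd : p ∣ Fintype.card Kˣ := by
    rw [← horder, ← hu.unit_spec, orderOf_units]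
    exact orderOf_dvd_card
  rw [Fintype.card_units, hcard] at hpdvd
  have h1 : (1:ℕ) ≤ 2 ^ π.natDegree := Nat.one_le_two_pow
  have hz : ((2 ^ π.natDegree - 1 : ℕ) : ZMod p) = 0 :=
    (ZMod.natCast_eq_zero_iff _ p).mpr hpdvd
  rw [Nat.cast_sub h1] at hz
  push_cast at hz
  rw [sub_eq_zero] at hz
  exact orderOf_dvd_iff_pow_eq_one.mpr hz

theorem order_two_le_five_of_twoPractical (p : ℕ) (hp : p.Prime) (hodd : Odd p)
    (h : TwoPractical (4 * p)) : orderOf (2 : ZMod p) ≤ 5 := by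
  by_contra hle
  push_neg at hle
  have hp2 : p % 2 = 1 := Nat.odd_iff.mp hodd
  have hp3 : 3 ≤ p := by have := hp.two_le; omega
  obtain ⟨q, hqm, hqd, hqdvd⟩ := h 5 (by norm_num) (by omega)
  have hfact : (X : (ZMod 2)[X]) ^ (4 * p) - 1 = (X ^ p - 1) ^ 4 := by
    have := sub_pow_char_pow (R := (ZMod 2)[X]) (p := 2) (n := 2)
      (x := (X:(ZMod 2)[X]) ^ p) (y := 1)
    rw [← pow_mul, one_pow] at this
    rw [show (4:ℕ) * p = p * 2 ^ 2 by ring, ← this]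
    norm_num
  rw [hfact] at hqdvd
  -- X + 1 facts
  have X1eq : (X - C 1 : (ZMod 2)[X]) = X + 1 := by
    rw [map_one, sub_eq_add_neg, CharTwo.neg_eq]
  have irr1 : Irreducible (X + 1 : (ZMod 2)[X]) := X1eq ▸ irreducible_X_sub_C (1 : ZMod 2)
  have prime1 : Prime (X + 1 : (ZMod 2)[X]) := X1eq ▸ prime_X_sub_C (1 : ZMod 2)
  -- separability / squarefreeness of X^p - 1
  have hsep : (X ^ p - 1 : (ZMod 2)[X]).Separable := by
    rw [X_pow_sub_one_separable_iff]
    intro h0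
    have := (ZMod.natCast_eq_zero_iff p 2).mp h0
    omega
  have hsq : Squarefree (X ^ p - 1 : (ZMod 2)[X]) := hsep.squarefree
  have hXdvd : (X + 1 : (ZMod 2)[X]) ∣ X ^ p - 1 := by
    rw [← X1eq]
    exact dvd_iff_isRoot.mpr (by simp [IsRoot])
  obtain ⟨s, hs⟩ := hXdvd
  have hnd : ¬ (X + 1 : (ZMod 2)[X]) ∣ s := by
    intro ⟨t, ht⟩
    exact irr1.not_isUnit (hsq (X + 1) ⟨t, by rw [hs, ht]; ring⟩)
  -- every normalized factor of q is X + 1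
  have hq0 : q ≠ 0 := hqm.ne_zero
  have hall : ∀ π ∈ normalizedFactors q, π = (X + 1 : (ZMod 2)[X]) := by
    intro π hπ
    have hirr := irreducible_of_normalized_factor π hπ
    have hmon : π.Monic := by
      have := monic_normalize (p := π) hirr.ne_zero
      rwa [normalize_normalized_factor π hπ] at this
    have hπq : π ∣ q := dvd_of_mem_normalizedFactors hπ
    have hπf : π ∣ X ^ p - 1 :=
      (prime_of_normalized_factor π hπ).dvd_of_dvd_pow (hπq.trans hqdvd)
    by_contra hne
    have hdeg := key_deg p hp π hmon hirr hπf hne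
    have h1 : π.natDegree ≤ 5 := hqd ▸ natDegree_le_of_dvd hπq hq0
    have h2 : orderOf (2 : ZMod p) ≤ π.natDegree := Nat.le_of_dvd hirr.natDegree_pos hdeg
    omega
  -- hence q = (X+1)^5
  have hrep : normalizedFactors q
      = Multiset.replicate (Multiset.card (normalizedFactors q)) (X + 1 : (ZMod 2)[X]) :=
    Multiset.eq_replicate_of_mem hall
  have hassoc := prod_normalizedFactors hq0
  rw [hrep, Multiset.prod_replicate] at hassoc
  have hqeq := eq_of_monic_of_associated
    ((monic_X_add_C (1 : ZMod 2)).pow _) hqm hassoc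
  have hcard5 : Multiset.card (normalizedFactors q) = 5 := by
    have := hqd
    rw [← hqeq, natDegree_pow, natDegree_X_add_C, mul_one] at this
    exact this
  rw [hcard5] at hqeq
  -- contradiction with squarefreeness
  rw [← hqeq] at hqdvd
  rw [hs, mul_pow] at hqdvd
  have hne4 : ((X + 1 : (ZMod 2)[X]) ^ 4) ≠ 0 := pow_ne_zero _ irr1.ne_zero
  have h5 : ((X + 1 : (ZMod 2)[X]) ^ 4) * (X + 1) ∣ ((X + 1) ^ 4) * s ^ 4 := by
    rw [← pow_succ]; exact hqdvd
  exact hnd (prime1.dvd_of_dvd_pow ((mul_dvd_mul_iff_left hne4).mp h5))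
end

section
/- Let m > 2 be an integer. Then m = k₁(m) if and only if m is a power of 2. -/
/-- `k1 m` is the smallest `k` with `1 ≤ k ≤ m` such that `C(m, k)` is odd. -/
noncomputable def k1 (m : ℕ) : ℕ := sInf {k | 1 ≤ k ∧ k ≤ m ∧ Odd (m.choose k)}

theorem k1_eq_self_iff {m : ℕ} (hm : m ≠ 0) :
    k1 m = m ↔ ∀ i ∈ Finset.Icc 1 (m - 1), 2 ∣ m.choose i := by
  have hmem : m ∈ {k | 1 ≤ k ∧ k ≤ m ∧ Odd (m.choose k)} :=
    ⟨Nat.one_le_iff_ne_zero.2 hm, le_rfl, by simp⟩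
  constructor
  · intro h i hi
    rw [Finset.mem_Icc] at hi
    rw [← even_iff_two_dvd, ← Nat.not_odd_iff_even]
    intro hodd
    have : k1 m ≤ i := Nat.sInf_le ⟨hi.1, by omega, hodd⟩
    omega
  · intro h
    refine le_antisymm (Nat.sInf_le hmem) (le_csInf ⟨m, hmem⟩ ?_)
    rintro k ⟨hk1, hkm, hodd⟩
    by_contra! hk
    exact Nat.not_even_iff_odd.2 hodd
      (even_iff_two_dvd.2 (h k (Finset.mem_Icc.2 ⟨hk1, by omega⟩)))

theorem eq_k1_iff_pow_two (m : ℕ) (hm : 2 < m) :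
    m = k1 m ↔ ∃ w : ℕ, m = 2 ^ w := by
  rw [eq_comm, k1_eq_self_iff (by omega)]
  constructor
  · intro h
    exact ⟨_, Choose.eq_pow_multiplicity_of_choose_modEq_zero_nat (by omega)
      fun i hi => Nat.modEq_zero_iff_dvd.2 (h i hi)⟩
  · rintro ⟨w, rfl⟩ i hi
    rw [Finset.mem_Icc] at hi
    exact Nat.prime_two.dvd_choose_pow (by omega) (by omega)
end

section
/- Let n ≥ 2 be an integer and let k be a positive integer with k < n. Then it is not the case that every matrix A in the ring 𝕋ₙ(𝔽₂) of n×n upper triangular matrices over 𝔽₂ can be written as A = E + N with E an idempotent of 𝕋ₙ(𝔽₂) and N ∈ 𝕋ₙ(𝔽₂) satisfying Nᵏ = 0. In other words, the nil-clean index of 𝕋ₙ(𝔽₂) is exactly n. -/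
/-!
For index `n`, split `A = diag A + (A - diag A)`: over `𝔽₂` every diagonal matrix is idempotent,
and a strictly upper triangular matrix has characteristic polynomial `Xⁿ`, so its `n`-th power
vanishes by Cayley–Hamilton. For index `k < n`, decompose the shift matrix `J = E + N`. Nilpotent
upper triangular matrices have zero diagonal, so `E` has the zero diagonal of `J`; then `E` is
nilpotent as well as idempotent, hence `E = 0` and `N = J`, contradicting `Jᵏ ≠ 0`.
-/

/-- The ring of n×n upper triangular matrices over 𝔽₂, as a subring of the full matrix ring. -/
def Triangular (n : ℕ) : Subring (Matrix (Fin n) (Fin n) (ZMod 2)) where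
  carrier := {A | A.BlockTriangular id}
  zero_mem' := Matrix.blockTriangular_zero
  one_mem' := Matrix.blockTriangular_one
  add_mem' := fun ha hb => ha.add hb
  neg_mem' := fun ha => ha.neg
  mul_mem' := fun ha hb => ha.mul hb

open Polynomial

namespace Matrix

variable {m R : Type*} [Fintype m]

theorem isIdempotentElem_diagonal [NonUnitalNonAssocSemiring R] [DecidableEq m] {d : m → R}
    (hd : ∀ i, IsIdempotentElem (d i)) : IsIdempotentElem (diagonal d) := by
  rw [IsIdempotentElem, diagonal_mul_diagonal]
  exact congrArg diagonal (funext hd)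

variable [LinearOrder m]

section Semiring

variable [Semiring R] {M N : Matrix m m R}

theorem IsUpperTriangular.diag_mul (hM : M.IsUpperTriangular) (hN : N.IsUpperTriangular) :
    (M * N).diag = M.diag * N.diag := by
  ext i
  refine (Finset.sum_eq_single i (fun l _ hl => ?_) (by simp)).trans rfl
  change M i l * N l i = 0
  rcases lt_or_gt_of_ne hl with h | h
  · rw [hM h, zero_mul]
  · rw [hN h, mul_zero]

theorem IsUpperTriangular.diag_pow [DecidableEq m] (hM : M.IsUpperTriangular) (k : ℕ) :
    (M ^ k).diag = M.diag ^ k := by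
  induction k with
  | zero => simp
  | succ k ih => rw [pow_succ, pow_succ, diag_mul (hM.pow k) hM, ih]

theorem IsUpperTriangular.diag_eq_zero_of_isNilpotent [DecidableEq m] [IsReduced R]
    (hM : M.IsUpperTriangular) (hM' : IsNilpotent M) : M.diag = 0 := by
  obtain ⟨k, hk⟩ := hM'
  exact IsReduced.eq_zero _ ⟨k, by rw [← hM.diag_pow, hk, diag_zero]⟩

end Semiring

variable [CommRing R] [DecidableEq m] {M E N : Matrix m m R}

theorem IsUpperTriangular.pow_card_eq_zero (hM : M.IsUpperTriangular) (hdiag : M.diag = 0) :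
    M ^ Fintype.card m = 0 := by
  have hchar : M.charpoly = X ^ Fintype.card m := by
    simp [charpoly_of_isUpperTriangular M hM, show ∀ i, M i i = 0 from congrFun hdiag]
  simpa [hchar] using aeval_self_charpoly M

theorem IsUpperTriangular.sub_diagonal_diag_pow_card_eq_zero (hM : M.IsUpperTriangular) :
    (M - diagonal M.diag) ^ Fintype.card m = 0 :=
  pow_card_eq_zero (hM.sub (blockTriangular_diagonal _)) (by simp)

theorem IsUpperTriangular.eq_zero_of_isIdempotentElem_of_diag_add_eq_zero [IsReduced R]
    (hE : E.IsUpperTriangular) (hN : N.IsUpperTriangular) (hEidem : IsIdempotentElem E)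
    (hNnil : IsNilpotent N) (hdiag : (E + N).diag = 0) : E = 0 := by
  have hEdiag : E.diag = 0 := by
    rwa [diag_add, hN.diag_eq_zero_of_isNilpotent hNnil, add_zero] at hdiag
  exact hEidem.eq_zero_of_isNilpotent ⟨_, hE.pow_card_eq_zero hEdiag⟩

end Matrix

open Matrix

def shiftMatrix (R : Type*) [Zero R] [One R] (n : ℕ) : Matrix (Fin n) (Fin n) R :=
  of fun i j => if (i : ℕ) + 1 = j then 1 else 0

section shiftMatrix

variable {R : Type*} {n : ℕ}

theorem shiftMatrix_isUpperTriangular [Zero R] [One R] : (shiftMatrix R n).IsUpperTriangular :=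
  fun i j hij => if_neg (by change j < i at hij; omega)

theorem diag_shiftMatrix [Zero R] [One R] : (shiftMatrix R n).diag = 0 :=
  funext fun i => if_neg (by omega)

theorem shiftMatrix_pow_apply [Semiring R] (k : ℕ) (i j : Fin n) :
    (shiftMatrix R n ^ k) i j = if (i : ℕ) + k = j then 1 else 0 := by
  induction k generalizing j with
  | zero => simp [one_apply, Fin.ext_iff]
  | succ k ih =>
    simp only [pow_succ, mul_apply, ih]
    simp only [shiftMatrix, of_apply, ← ite_and, mul_ite, mul_one, mul_zero]
    split_ifs with h
    · rw [Finset.sum_eq_single ⟨i + k, by omega⟩] <;> grind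
    · exact Finset.sum_eq_zero fun l _ => if_neg (by omega)

theorem shiftMatrix_pow_ne_zero [Semiring R] [Nontrivial R] {k : ℕ} (hk : k < n) :
    shiftMatrix R n ^ k ≠ 0 := fun h => by
  simpa [shiftMatrix_pow_apply] using congrFun₂ h ⟨0, by omega⟩ ⟨k, hk⟩

end shiftMatrix

theorem Tn_F2_nil_clean_index_eq_general (n k : ℕ) (hkn : k < n) :
    (¬ ∀ A : Triangular n, ∃ E N : Triangular n,
        E * E = E ∧ N ^ k = 0 ∧ A = E + N) ∧
    (∀ A : Triangular n, ∃ E N : Triangular n,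
        E * E = E ∧ N ^ n = 0 ∧ A = E + N) := by
  refine ⟨fun h => ?_, fun A => ?_⟩
  · obtain ⟨E, N, hE, hN, hA⟩ := h ⟨shiftMatrix _ n, shiftMatrix_isUpperTriangular⟩
    have hA' : shiftMatrix _ n = E.val + N.val := congrArg Subtype.val hA
    have hN' : N.val ^ k = 0 := congrArg Subtype.val hN
    have hE0 : E.val = 0 := IsUpperTriangular.eq_zero_of_isIdempotentElem_of_diag_add_eq_zero
      E.2 N.2 (congrArg Subtype.val hE) ⟨k, hN'⟩ (hA' ▸ diag_shiftMatrix)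
    exact shiftMatrix_pow_ne_zero hkn (by rwa [hA', hE0, zero_add])
  · let D : Triangular n := ⟨diagonal A.val.diag, blockTriangular_diagonal _⟩
    refine ⟨D, A - D, Subtype.ext ?_, Subtype.ext ?_, (add_sub_cancel D A).symm⟩
    · exact isIdempotentElem_diagonal fun i => (sq _).symm.trans (ZMod.pow_card _)
    · simpa using IsUpperTriangular.sub_diagonal_diag_pow_card_eq_zero A.2

theorem Tn_F2_nil_clean_index_eq (n k : ℕ) (hn : 2 ≤ n) (hk : 0 < k) (hkn : k < n) :
    (¬ ∀ A : Triangular n, ∃ E N : Triangular n,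
        E * E = E ∧ N ^ k = 0 ∧ A = E + N) ∧
    (∀ A : Triangular n, ∃ E N : Triangular n,
        E * E = E ∧ N ^ n = 0 ∧ A = E + N) :=
  Tn_F2_nil_clean_index_eq_general n k hkn
end

section
/- Let n > 2 and m > 2 be integers, and let N ∈ 𝕋ₙ(𝔽₂) be a nilpotent upper triangular matrix such that (I + N)ᵐ = I. Then N^{k₁(m)} = 0. -/
section Unipotent

variable {R : Type*} [Ring R] {p : ℕ} [hp : Fact p.Prime] [CharP R p] {x : R}

theorem one_add_pow_char_pow (x : R) (j : ℕ) : (1 + x) ^ p ^ j = 1 + x ^ p ^ j := by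
  rw [add_pow_char_pow_of_commute p j (Commute.one_left x), one_pow]

theorem eq_zero_of_one_add_pow_eq_one_of_coprime (hx : IsNilpotent x) {q : ℕ}
    (hq : q.Coprime p) (h : (1 + x) ^ q = 1) : x = 0 := by
  obtain ⟨j, hj⟩ := hx
  have hunipotent : (1 + x) ^ p ^ j = 1 := by
    rw [one_add_pow_char_pow, pow_eq_zero_of_le (Nat.lt_pow_self hp.out.one_lt).le hj, add_zero]
  have horder : orderOf (1 + x) = 1 := by
    have := Nat.dvd_gcd (orderOf_dvd_of_pow_eq_one h) (orderOf_dvd_of_pow_eq_one hunipotent)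
    rwa [(hq.pow_right j).gcd_eq_one, Nat.dvd_one] at this
  exact add_eq_left.mp (orderOf_eq_one_iff.mp horder)

theorem pow_ordProj_eq_zero_of_one_add_pow_eq_one (hx : IsNilpotent x) {m : ℕ} (hm : m ≠ 0)
    (h : (1 + x) ^ m = 1) : x ^ ordProj[p] m = 0 := by
  refine eq_zero_of_one_add_pow_eq_one_of_coprime (hx.pow_of_pos (pow_pos hp.out.pos _).ne')
    (q := ordCompl[p] m) (Nat.coprime_ordCompl hp.out hm).symm ?_
  rw [← one_add_pow_char_pow, ← pow_mul, Nat.ordProj_mul_ordCompl_eq_self, h]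

end Unipotent

theorem Nat.ordProj_dvd_of_not_dvd_choose {p m k : ℕ} (hp : p.Prime) (hk : k ≠ 0)
    (h : ¬ p ∣ m.choose k) : ordProj[p] m ∣ k := by
  obtain _ | m := m
  · simp
  obtain ⟨k, rfl⟩ := Nat.exists_eq_add_one_of_ne_zero hk
  have hdvd : ordProj[p] (m + 1) ∣ (m + 1).choose (k + 1) * (k + 1) := by
    rw [← Nat.add_one_mul_choose_eq]
    exact (Nat.ordProj_dvd _ _).mul_right _
  exact ((hp.coprime_iff_not_dvd.mpr h).pow_left _).dvd_of_dvd_mul_left hdvd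

theorem k1_mem {m : ℕ} (hm : m ≠ 0) : k1 m ∈ {k | 1 ≤ k ∧ k ≤ m ∧ Odd (m.choose k)} :=
  Nat.sInf_mem ⟨m, by omega, le_rfl, by simp⟩

theorem ordProj_two_le_k1 {m : ℕ} (hm : m ≠ 0) : ordProj[2] m ≤ k1 m := by
  obtain ⟨hpos, -, hodd⟩ := k1_mem hm
  exact Nat.le_of_dvd hpos <| Nat.ordProj_dvd_of_not_dvd_choose Nat.prime_two (by omega)
    hodd.not_two_dvd_nat

theorem nilpotent_pow_k1_eq_zero (n m : ℕ) (hn : 2 < n) (hm : 2 < m)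
    (N : Triangular n) (hN : IsNilpotent N) (h : (1 + N) ^ m = 1) :
    N ^ k1 m = 0 := by
  have : Nonempty (Fin n) := ⟨⟨0, by omega⟩⟩
  exact pow_eq_zero_of_le (ordProj_two_le_k1 (by omega))
    (pow_ordProj_eq_zero_of_one_add_pow_eq_one hN (by omega) h)
end

section
/- Let n > 2 and m > 2 be integers. Then the ring 𝕋ₙ(𝔽₂) of n×n upper triangular matrices over 𝔽₂ is almost m-torsion clean if and only if n ≤ k₁(m). -/
def AlmostTorsionClean (R : Type*) [Ring R] (m : ℕ) : Prop :=
  ∀ r : R, ∃ u e : R, IsUnit u ∧ u ^ m = 1 ∧ e * e = e ∧ r = u + e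

def TorsionClean (R : Type*) [Ring R] (m : ℕ) : Prop :=
  AlmostTorsionClean R m ∧ ∀ k : ℕ, 0 < k → k < m → ¬ AlmostTorsionClean R k

lemma zmod2_eq_one : ∀ x : ZMod 2, x ≠ 0 → x = 1 := by decide
lemma zmod2_of_add : ∀ x : ZMod 2, (0 : ZMod 2) = 1 + x → x = 1 := by decide
lemma zmod2_sub_sub : ∀ x : ZMod 2, x - (1 - x) - 1 = 0 := by decide
lemma zmod2_idem : ∀ x : ZMod 2, x * x = x := by decide

section aux

variable {R : Type*} [CommRing R] {n : ℕ}

lemma strict_pow_apply (M : Matrix (Fin n) (Fin n) R)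
    (h : ∀ i j : Fin n, (j : ℕ) ≤ (i : ℕ) → M i j = 0) :
    ∀ (p : ℕ) (i j : Fin n), (j : ℕ) < (i : ℕ) + p → (M ^ p) i j = 0 := by
  intro p
  induction p with
  | zero =>
    intro i j hj
    rw [pow_zero, Matrix.one_apply_ne (by intro he; rw [he] at hj; omega)]
  | succ p ih =>
    intro i j hj
    rw [pow_succ, Matrix.mul_apply]
    apply Finset.sum_eq_zero
    intro l _
    by_cases hl : (l : ℕ) < (i : ℕ) + p
    · rw [ih i l hl, zero_mul]
    · rw [h l j (by omega), mul_zero]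

lemma strict_pow_eq_zero (M : Matrix (Fin n) (Fin n) R)
    (h : ∀ i j : Fin n, (j : ℕ) ≤ (i : ℕ) → M i j = 0) : M ^ n = 0 := by
  ext i j
  rw [strict_pow_apply M h n i j (by omega)]
  simp

lemma shift_pow (p : ℕ) (i j : Fin n) :
    ((Matrix.of fun i j : Fin n => if (j : ℕ) = (i : ℕ) + 1 then (1 : R) else 0) ^ p) i j
      = if (j : ℕ) = (i : ℕ) + p then 1 else 0 := by
  induction p generalizing i j with
  | zero =>
    rw [pow_zero, Matrix.one_apply]
    by_cases hij : i = j
    · subst hij; simp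
    · rw [if_neg hij, if_neg (by intro hc; exact hij (Fin.ext (by omega)))]
  | succ p ih =>
    rw [pow_succ, Matrix.mul_apply]
    by_cases hc : (j : ℕ) = (i : ℕ) + p + 1
    · have hip : (i : ℕ) + p < n := by omega
      rw [if_pos (by omega)]
      rw [Finset.sum_eq_single (⟨(i : ℕ) + p, hip⟩ : Fin n)]
      · rw [ih]
        simp [hc]
      · intro l _ hl
        rw [ih, if_neg (by intro hlc; exact hl (Fin.ext (by simpa using hlc))), zero_mul]
      · intro habs; exact absurd (Finset.mem_univ _) habs
    · rw [if_neg (show ¬(j : ℕ) = (i : ℕ) + (p + 1) by omega)]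
      apply Finset.sum_eq_zero
      intro l _
      by_cases hl : (l : ℕ) = (i : ℕ) + p
      · rw [Matrix.of_apply, if_neg (by omega), mul_zero]
      · rw [ih, if_neg hl, zero_mul]

end aux

theorem Tn_F2_almost_m_torsion_clean_iff (n m : ℕ) (hn : 2 < n) (hm : 2 < m) :
    AlmostTorsionClean (Triangular n) m ↔ n ≤ k1 m := by
  haveI : NeZero n := ⟨by omega⟩
  have hne : {k | 1 ≤ k ∧ k ≤ m ∧ Odd (m.choose k)}.Nonempty :=
    ⟨m, by omega, le_refl m, by simp [Nat.choose_self]⟩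
  obtain ⟨hK1', hKm', hKodd'⟩ := Nat.sInf_mem hne
  have hK1 : 1 ≤ k1 m := hK1'
  have hKm : k1 m ≤ m := hKm'
  have hKodd : Odd (m.choose (k1 m)) := hKodd'
  constructor
  · intro h
    by_contra hlt
    push_neg at hlt
    -- the shift matrix
    set S : Matrix (Fin n) (Fin n) (ZMod 2) :=
      Matrix.of fun i j : Fin n => if (j : ℕ) = (i : ℕ) + 1 then 1 else 0 with hS
    have hSmem : S ∈ Triangular n := by
      intro i j hij
      simp only [hS, Matrix.of_apply]
      rw [if_neg (by simp only [id_eq] at hij; omega)]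
    obtain ⟨u, e, hu, hum, hee, hre⟩ := h ⟨S, hSmem⟩
    have hUdet : IsUnit (↑u : Matrix (Fin n) (Fin n) (ZMod 2)).det :=
      (Matrix.isUnit_iff_isUnit_det _).mp (hu.map (Triangular n).subtype)
    rw [Matrix.det_of_upperTriangular u.2] at hUdet
    have hudiag : ∀ i, (↑u : Matrix (Fin n) (Fin n) (ZMod 2)) i i = 1 := by
      intro i
      have h0 : (↑u : Matrix (Fin n) (Fin n) (ZMod 2)) i i ≠ 0 :=
        Finset.prod_ne_zero_iff.mp hUdet.ne_zero i (Finset.mem_univ i)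
      exact zmod2_eq_one _ h0
    have hSE : S = (↑u : Matrix (Fin n) (Fin n) (ZMod 2)) + ↑e := congrArg Subtype.val hre
    have hediag : ∀ i, (↑e : Matrix (Fin n) (Fin n) (ZMod 2)) i i = 1 := by
      intro i
      have h1 := congrFun (congrFun hSE i) i
      simp only [hS, Matrix.of_apply, Matrix.add_apply, if_neg (by omega : ¬(i : ℕ) = (i : ℕ) + 1),
        hudiag i] at h1
      exact zmod2_of_add _ h1
    have hEunit : IsUnit (↑e : Matrix (Fin n) (Fin n) (ZMod 2)) := by
      rw [Matrix.isUnit_iff_isUnit_det, Matrix.det_of_upperTriangular e.2]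
      simp [hediag]
    have hE1 : (↑e : Matrix (Fin n) (Fin n) (ZMod 2)) = 1 := by
      have hee2 := congrArg (Triangular n).subtype hee
      rw [map_mul] at hee2
      exact hEunit.mul_left_cancel (by rw [mul_one]; exact hee2)
    have hU : (↑u : Matrix (Fin n) (Fin n) (ZMod 2)) = S + 1 := by
      rw [hE1] at hSE
      rw [hSE, add_assoc, CharTwo.add_self_eq_zero, add_zero]
    have hUm : (S + 1) ^ m = 1 := by
      rw [← hU]
      exact_mod_cast congrArg Subtype.val hum
    rw [(Commute.one_right S).add_pow m] at hUm
    have hKn : k1 m < n := hlt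
    have hentry := congrFun (congrFun hUm ⟨0, by omega⟩) ⟨k1 m, hKn⟩
    rw [Matrix.sum_apply] at hentry
    have hterm : ∀ j ∈ Finset.range (m + 1),
        ((S ^ j * 1 ^ (m - j) * (m.choose j : Matrix (Fin n) (Fin n) (ZMod 2)))
          (⟨0, by omega⟩ : Fin n) (⟨k1 m, hKn⟩ : Fin n))
          = if k1 m = j then ((m.choose j : ℕ) : ZMod 2) else 0 := by
      intro j _
      rw [one_pow, mul_one, ← nsmul_eq_mul' (S ^ j) (m.choose j), Matrix.smul_apply,
        hS, shift_pow]
      simp only [nsmul_eq_mul]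
      by_cases hj : k1 m = j
      · rw [if_pos (by omega), if_pos hj, mul_one]
      · rw [if_neg (by omega), if_neg hj, mul_zero]
    rw [Finset.sum_congr rfl hterm, Finset.sum_ite_eq] at hentry
    rw [if_pos (Finset.mem_range.mpr (by omega))] at hentry
    have hone : (1 : Matrix (Fin n) (Fin n) (ZMod 2))
        (⟨0, by omega⟩ : Fin n) (⟨k1 m, hKn⟩ : Fin n) = 0 :=
      Matrix.one_apply_ne (by simp only [ne_eq, Fin.mk.injEq]; omega)
    rw [hone] at hentry
    have hcast : ((m.choose (k1 m) : ℕ) : ZMod 2) = 1 := by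
      rw [← ZMod.natCast_mod, Nat.odd_iff.mp hKodd]
      rfl
    rw [hcast] at hentry
    exact one_ne_zero hentry
  · intro hnK r
    set d : Fin n → ZMod 2 := fun i => 1 - (↑r : Matrix (Fin n) (Fin n) (ZMod 2)) i i with hd
    have hdm : Matrix.diagonal d ∈ Triangular n := by
      intro i j hij
      exact Matrix.diagonal_apply_ne d (by intro hc; subst hc; exact lt_irrefl _ hij)
    set e : Triangular n := ⟨Matrix.diagonal d, hdm⟩ with he
    set u : Triangular n := r - e with hu
    have hN : ∀ i j : Fin n, (j : ℕ) ≤ (i : ℕ) →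
        ((↑u : Matrix (Fin n) (Fin n) (ZMod 2)) - 1) i j = 0 := by
      intro i j hij
      rcases eq_or_lt_of_le hij with hij' | hij'
      · have : i = j := Fin.ext hij'.symm
        subst this
        simp only [Matrix.sub_apply, Matrix.one_apply_eq, hu]
        show ((↑r : Matrix (Fin n) (Fin n) (ZMod 2)) - Matrix.diagonal d) i i - 1 = 0
        rw [Matrix.sub_apply, Matrix.diagonal_apply_eq, hd]
        exact zmod2_sub_sub _
      · rw [Matrix.sub_apply, u.2 (show id j < id i from hij'),
          Matrix.one_apply_ne (by intro hc; subst hc; exact lt_irrefl _ hij'), sub_zero]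
    have hNn : ((↑u : Matrix (Fin n) (Fin n) (ZMod 2)) - 1) ^ n = 0 :=
      strict_pow_eq_zero _ hN
    have hnil : IsNilpotent (u - 1) := by
      refine ⟨n, ?_⟩
      have : ((↑((u - 1) ^ n) : Matrix (Fin n) (Fin n) (ZMod 2))) = 0 := by
        push_cast
        exact hNn
      exact_mod_cast this
    refine ⟨u, e, ?_, ?_, ?_, ?_⟩
    · have := hnil.isUnit_add_one
      rwa [sub_add_cancel] at this
    · -- u ^ m = 1
      have hcoe : ((↑(u ^ m) : Matrix (Fin n) (Fin n) (ZMod 2)))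
          = (((↑u : Matrix (Fin n) (Fin n) (ZMod 2)) - 1) + 1) ^ m := by
        push_cast
        rw [sub_add_cancel]
      have hexp := (Commute.one_right ((↑u : Matrix (Fin n) (Fin n) (ZMod 2)) - 1)).add_pow m
      rw [hexp] at hcoe
      have hval : ((↑(u ^ m) : Matrix (Fin n) (Fin n) (ZMod 2))) = 1 := by
        rw [hcoe]
        rw [Finset.sum_eq_single 0]
        · simp
        · intro j hj hj0
          simp only [Finset.mem_range] at hj
          rw [one_pow, mul_one]
          by_cases hjn : n ≤ j
          · rw [pow_eq_zero_of_le hjn hNn, zero_mul]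
          · push_neg at hjn
            have hjlt : j < k1 m := by omega
            have hjnot := Nat.notMem_of_lt_sInf hjlt
            simp only [Set.mem_setOf_eq, not_and, not_or] at hjnot
            have heven : ¬ Odd (m.choose j) := hjnot (by omega) (by omega)
            rw [Nat.not_odd_iff_even] at heven
            have : ((m.choose j : ℕ) : Matrix (Fin n) (Fin n) (ZMod 2)) = 0 := by
              rw [CharP.cast_eq_zero_iff (Matrix (Fin n) (Fin n) (ZMod 2)) 2]
              exact heven.two_dvd
            rw [this, mul_zero]
        · intro habs
          exact absurd (Finset.mem_range.mpr (by omega)) habs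
      exact_mod_cast hval
    · -- e * e = e
      apply Subtype.ext
      push_cast
      show Matrix.diagonal d * Matrix.diagonal d = Matrix.diagonal d
      rw [Matrix.diagonal_mul_diagonal]
      exact congrArg Matrix.diagonal (funext fun i => zmod2_idem (d i))
    · rw [hu, sub_add_cancel]
end

section
/- Let n > 2 and m > 2 be integers. If the ring 𝕋ₙ(𝔽₂) of n×n upper triangular matrices over 𝔽₂ is m-torsion clean, then m is even. -/
/-!
Every unit `u` of `𝕋ₙ(𝔽₂)` is unipotent: its diagonal consists of units of `𝔽₂`, i.e. of ones,
so Cayley–Hamilton gives `(u - 1)ⁿ = 0`, and in characteristic `2` this yields `u ^ 2ⁿ = 1`.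
If `m` were odd, `uᵐ = 1` together with `u ^ 2ⁿ = 1` would force `u = 1`, so every decomposition
witnessing almost `m`-torsion cleanness would witness almost `1`-torsion cleanness, contradicting
the minimality of `m > 1`.
-/

open Polynomial

theorem Matrix.IsUpperTriangular.isUnit_diag {n R : Type*} [Fintype n] [LinearOrder n] [CommRing R]
    {M : Matrix n n R} (h : M.IsUpperTriangular) (hM : IsUnit M) (i : n) : IsUnit (M i i) := by
  rw [Matrix.isUnit_iff_isUnit_det, Matrix.det_of_isUpperTriangular h, IsUnit.prod_univ_iff] at hM
  exact hM i

theorem Matrix.IsUpperTriangular.sub_one_pow_card_eq_zero {n R : Type*} [Fintype n] [LinearOrder n]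
    [CommRing R] {M : Matrix n n R} (h : M.IsUpperTriangular) (hdiag : ∀ i, M i i = 1) :
    (M - 1) ^ Fintype.card n = 0 := by
  have := aeval_self_charpoly M
  rwa [charpoly_of_isUpperTriangular M h, Finset.prod_congr rfl fun i _ => by rw [hdiag i],
    Finset.prod_const, Finset.card_univ, map_one, map_pow, map_sub, aeval_X, map_one] at this

theorem pow_char_pow_eq_one_of_sub_one_pow_eq_zero {K A : Type*} [CommRing K] (p : ℕ)
    [Fact p.Prime] [CharP K p] [Ring A] [Algebra K A] {u : A} {k j : ℕ}
    (hu : (u - 1) ^ k = 0) (hkj : k ≤ p ^ j) : u ^ p ^ j = 1 := by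
  have frobenius := congrArg (aeval u) (sub_pow_char_pow (R := K[X]) (p := p) (n := j) X 1)
  simp only [map_pow, map_sub, aeval_X, map_one, one_pow, pow_eq_zero_of_le hkj hu] at frobenius
  exact sub_eq_zero.mp frobenius.symm

theorem Triangular.pow_two_pow_eq_one_of_isUnit {n : ℕ} {u : Triangular n} (hu : IsUnit u) :
    u ^ 2 ^ n = 1 := by
  have hM : (u : Matrix (Fin n) (Fin n) (ZMod 2)).IsUpperTriangular := u.2
  have hdiag i : (u : Matrix (Fin n) (Fin n) (ZMod 2)) i i = 1 :=
    (hM.isUnit_diag (hu.map (Triangular n).subtype) i).eq_one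
  have hnil := hM.sub_one_pow_card_eq_zero hdiag
  rw [Fintype.card_fin] at hnil
  exact Subtype.ext <| pow_char_pow_eq_one_of_sub_one_pow_eq_zero (K := ZMod 2) 2 hnil
    Nat.lt_two_pow_self.le

theorem AlmostTorsionClean.of_pow_eq_one_imp {R : Type*} [Ring R] {m k : ℕ}
    (h : AlmostTorsionClean R m) (hmk : ∀ u : R, IsUnit u → u ^ m = 1 → u ^ k = 1) :
    AlmostTorsionClean R k := fun r => by
  obtain ⟨u, e, hu, hum, he, rfl⟩ := h r
  exact ⟨u, e, hu, hmk u hu hum, he, rfl⟩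

theorem even_of_Tn_F2_m_torsion_clean_general (n m : ℕ) (hm : 2 < m)
    (h : TorsionClean (Triangular n) m) : Even m := by
  by_contra hodd
  have hcop : m.Coprime (2 ^ n) := (Nat.not_even_iff_odd.mp hodd).coprime_two_right.pow_right n
  refine h.2 1 one_pos (by omega) (h.1.of_pow_eq_one_imp fun u hu hum => ?_)
  rw [pow_one, ← pow_eq_one_iff_of_coprime hcop]
  exact ⟨hum, Triangular.pow_two_pow_eq_one_of_isUnit hu⟩

theorem even_of_Tn_F2_m_torsion_clean (n m : ℕ) (hn : 2 < n) (hm : 2 < m)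
    (h : TorsionClean (Triangular n) m) : Even m :=
  even_of_Tn_F2_m_torsion_clean_general n m hm h
end

section
/- Let n > 2 and m > 2 be integers, and let t ≥ 1 be an integer such that 2ᵗ < n ≤ 2^{t+1}. Then the ring 𝕋ₙ(𝔽₂) of n×n upper triangular matrices over 𝔽₂ is m-torsion clean if and only if m = 2^{t+1}. -/
/-
Every unit of `𝕋ₙ(𝔽₂)` has all diagonal entries `1`, so it is `1 + N` with `N` strictly upper
triangular, whence `Nⁿ = 0`; in characteristic `2`, `(1 + N) ^ 2ˢ = 1 + N ^ 2ˢ`, so every unit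
satisfies `u ^ 2^(t+1) = 1`. Every `r` is then `(r - e) + e` with `e` the diagonal idempotent
`diag (1 + rᵢᵢ)`, and `r - e` has unit diagonal, hence is a unit.
Conversely, in any decomposition `J = u + e` of the shift matrix `J` the idempotent `e` has unit
diagonal, so it is a unit and therefore `e = 1`; thus `u = 1 + J`, whose order is exactly `2^(t+1)`
because `J ^ 2ᵗ ≠ 0` when `2ᵗ < n`.
-/

theorem torsionClean_iff_eq {R : Type*} [Ring R] {N m : ℕ} (hN : 0 < N) (hm : 0 < m)
    (hclean : AlmostTorsionClean R N)
    (hmin : ∀ k, 0 < k → k < N → ¬ AlmostTorsionClean R k) :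
    TorsionClean R m ↔ m = N := by
  constructor
  · rintro ⟨hclean_m, hmin_m⟩
    rcases lt_trichotomy m N with hlt | heq | hgt
    · exact absurd hclean_m (hmin m hm hlt)
    · exact heq
    · exact absurd hclean (hmin_m N hN hgt)
  · rintro rfl
    exact ⟨hclean, hmin⟩

namespace Matrix

variable {R : Type*} [Semiring R] {n : ℕ}

theorem IsUpperTriangular.pow_apply_eq_zero_of_lt_add {A : Matrix (Fin n) (Fin n) R}
    (hA : A.IsUpperTriangular) (hd : ∀ i, A i i = 0) (k : ℕ) {i j : Fin n}
    (hij : (j : ℕ) < i + k) : (A ^ k) i j = 0 := by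
  induction k generalizing i with
  | zero => exact one_apply_ne (Fin.ne_of_gt hij)
  | succ k ih =>
    rw [pow_succ', mul_apply]
    refine Finset.sum_eq_zero fun l _ => ?_
    rcases lt_or_ge i l with hil | hli
    · rw [ih (by omega), mul_zero]
    · rcases hli.eq_or_lt with rfl | hli
      · rw [hd, zero_mul]
      · rw [hA hli, zero_mul]

theorem IsUpperTriangular.pow_eq_zero_of_diag_eq_zero {A : Matrix (Fin n) (Fin n) R}
    (hA : A.IsUpperTriangular) (hd : ∀ i, A i i = 0) : A ^ n = 0 := by
  ext i j
  exact hA.pow_apply_eq_zero_of_lt_add hd n (by omega)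

variable (R n) in
def upperShift : Matrix (Fin n) (Fin n) R :=
  of fun i j => if (i : ℕ) + 1 = j then 1 else 0

theorem upperShift_isUpperTriangular : (upperShift R n).IsUpperTriangular := by
  intro i j hji
  exact if_neg (by simp only [id, Fin.lt_def] at hji; omega)

@[simp]
theorem upperShift_apply_self (i : Fin n) : upperShift R n i i = 0 :=
  if_neg (by omega)

theorem upperShift_pow_apply_of_eq_add (k : ℕ) {i j : Fin n} (hij : (j : ℕ) = i + k) :
    (upperShift R n ^ k) i j = 1 := by
  induction k generalizing j with
  | zero =>
    obtain rfl : j = i := Fin.ext hij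
    exact one_apply_eq j
  | succ k ih =>
    have hl : (i : ℕ) + k < n := by omega
    rw [pow_succ, mul_apply, Finset.sum_eq_single ⟨i + k, hl⟩]
    · rw [ih rfl, one_mul]
      exact if_pos (by simp only; omega)
    · intro l _ hl
      rw [upperShift, of_apply, if_neg (fun h => hl (Fin.ext (by simp only; omega))), mul_zero]
    · exact fun h => (h (Finset.mem_univ _)).elim

end Matrix

open Matrix

namespace Triangular

variable {n : ℕ}

theorem isUpperTriangular_coe (x : Triangular n) :
    (x : Matrix (Fin n) (Fin n) (ZMod 2)).IsUpperTriangular :=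
  x.2

theorem pow_eq_zero_of_diag_eq_zero {x : Triangular n}
    (hd : ∀ i, (x : Matrix (Fin n) (Fin n) (ZMod 2)) i i = 0) : x ^ n = 0 :=
  Subtype.ext <| by simpa using (isUpperTriangular_coe x).pow_eq_zero_of_diag_eq_zero hd

theorem isUnit_iff_diag_eq_one {x : Triangular n} :
    IsUnit x ↔ ∀ i, (x : Matrix (Fin n) (Fin n) (ZMod 2)) i i = 1 := by
  constructor
  · intro hx i
    have hdet : IsUnit (x : Matrix (Fin n) (Fin n) (ZMod 2)).det :=
      (isUnit_iff_isUnit_det _).mp (hx.map (Triangular n).subtype)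
    rw [det_of_isUpperTriangular (isUpperTriangular_coe x), IsUnit.prod_univ_iff] at hdet
    exact isUnit_iff_eq_one.mp (hdet i)
  · intro hd
    have hN : IsNilpotent (x - 1) := ⟨n, pow_eq_zero_of_diag_eq_zero fun i => by simp [hd]⟩
    simpa using hN.isUnit_one_add

variable [NeZero n]

theorem pow_two_pow_eq_one_of_isUnit_s16 {s : ℕ} (hs : n ≤ 2 ^ s) {u : Triangular n}
    (hu : IsUnit u) : u ^ 2 ^ s = 1 := by
  have hN : (u - 1) ^ 2 ^ s = 0 :=
    pow_eq_zero_of_le hs <| pow_eq_zero_of_diag_eq_zero fun i => by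
      simp [isUnit_iff_diag_eq_one.mp hu i]
  rw [← add_sub_cancel 1 u, add_pow_expChar_pow_of_commute 2 s (Commute.one_left _), hN,
    one_pow, add_zero]

theorem almostTorsionClean_two_pow {s : ℕ} (hs : n ≤ 2 ^ s) :
    AlmostTorsionClean (Triangular n) (2 ^ s) := by
  intro r
  let e : Triangular n :=
    ⟨diagonal fun i => 1 + (r : Matrix (Fin n) (Fin n) (ZMod 2)) i i, blockTriangular_diagonal _⟩
  have he : e * e = e := Subtype.ext <| (diagonal_mul_diagonal _ _).trans <|
    congrArg diagonal <| funext fun i => (sq _).symm.trans (ZMod.pow_card _)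
  have hu : IsUnit (r - e) := isUnit_iff_diag_eq_one.mpr fun i => by simp [e]
  exact ⟨r - e, e, hu, pow_two_pow_eq_one_of_isUnit_s16 hs hu, he, (sub_add_cancel r e).symm⟩

def shift (n : ℕ) : Triangular n :=
  ⟨upperShift (ZMod 2) n, upperShift_isUpperTriangular⟩

theorem orderOf_one_add_shift {t : ℕ} (h1 : 2 ^ t < n) (h2 : n ≤ 2 ^ (t + 1)) :
    orderOf (1 + shift n) = 2 ^ (t + 1) := by
  have hu : IsUnit (1 + shift n) := isUnit_iff_diag_eq_one.mpr fun i => by simp [shift]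
  refine orderOf_eq_prime_pow ?_ (pow_two_pow_eq_one_of_isUnit_s16 h2 hu)
  rw [add_pow_expChar_pow_of_commute 2 t (Commute.one_left _), one_pow, add_eq_left]
  intro h
  have h0 := congrArg
    (fun x : Triangular n => (x : Matrix (Fin n) (Fin n) (ZMod 2)) 0 ⟨2 ^ t, h1⟩) h
  simp [shift, upperShift_pow_apply_of_eq_add] at h0

theorem not_almostTorsionClean_of_lt {t k : ℕ} (h1 : 2 ^ t < n) (h2 : n ≤ 2 ^ (t + 1))
    (hk0 : 0 < k) (hk : k < 2 ^ (t + 1)) : ¬ AlmostTorsionClean (Triangular n) k := by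
  intro hclean
  obtain ⟨u, e, hu, huk, he, hsum⟩ := hclean (shift n)
  have he_unit : IsUnit e := isUnit_iff_diag_eq_one.mpr fun i => by
    rw [eq_sub_of_add_eq' hsum.symm]
    simp [shift, isUnit_iff_diag_eq_one.mp hu i]
  have he1 : e = 1 := (IsIdempotentElem.iff_eq_one_of_isUnit he_unit).mp he
  have hu_eq : u = 1 + shift n := by
    rw [eq_sub_of_add_eq hsum.symm, he1, CharTwo.sub_eq_add, add_comm]
  have hdvd := orderOf_dvd_of_pow_eq_one huk
  rw [hu_eq, orderOf_one_add_shift h1 h2] at hdvd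
  exact absurd (Nat.le_of_dvd hk0 hdvd) (not_le.mpr hk)

end Triangular

theorem Tn_F2_m_torsion_clean_iff_pow_general (n m t : ℕ) (hm : 2 < m) (h1 : 2 ^ t < n)
    (h2 : n ≤ 2 ^ (t + 1)) :
    TorsionClean (Triangular n) m ↔ m = 2 ^ (t + 1) := by
  have : NeZero n := ⟨(Nat.zero_lt_of_lt h1).ne'⟩
  exact torsionClean_iff_eq (by positivity) (by omega) (Triangular.almostTorsionClean_two_pow h2)
    fun k => Triangular.not_almostTorsionClean_of_lt h1 h2

theorem Tn_F2_m_torsion_clean_iff_pow (n m t : ℕ) (hn : 2 < n) (hm : 2 < m)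
    (ht : 1 ≤ t) (h1 : 2 ^ t < n) (h2 : n ≤ 2 ^ (t + 1)) :
    TorsionClean (Triangular n) m ↔ m = 2 ^ (t + 1) :=
  Tn_F2_m_torsion_clean_iff_pow_general n m t hm h1 h2
end
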